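/- Let a, b, e, f, p, q, r, s be real numbers, N = N(a,b,e,f), M = N(p,q,r,s), and A = exp(M). Then A·N·A⁻¹ = N(a, b, e − bp + aq, f − 2ep + bp² − apq + 2ar). In particular, the parameters a and b are unchanged under conjugation by exp(M). -/

import Mathlib

open Matrix

/-- The symplectic form matrix `J`. -/
def Jmat (R : Type*) [Zero R] [One R] [Neg R] : Matrix (Fin 4) (Fin 4) R :=
  !![0, 0, 0, 1;
     0, 0, 1, 0;
     0, -1, 0, 0;
     -1, 0, 0, 0]

/-- The normalized nilpotent matrix `N(a,b,e,f)`. -/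
def Nmat {R : Type*} [Zero R] [Neg R] (a b e f : R) : Matrix (Fin 4) (Fin 4) R :=
  !![0, 0, 0, 0;
     a, 0, 0, 0;
     e, b, 0, 0;
     f, e, -a, 0]

/-! `N(p,q,r,s)` is strictly lower triangular, so its exponential is the cubic
`1 + M + M²/2 + M³/6`, and `exp(M)⁻¹ = exp(-M) = exp(N(-p,-q,-r,-s))` is given by the same
formula. The conjugate is then an explicit product of three `4 × 4` matrices. -/

open Finset Nat in
theorem NormedSpace.exp_eq_sum_range_of_pow_eq_zero (𝕂 : Type*) {𝔸 : Type*} [Field 𝕂]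
    [CharZero 𝕂] [Ring 𝔸] [Algebra 𝕂 𝔸] [TopologicalSpace 𝔸] [IsTopologicalRing 𝔸] {x : 𝔸}
    {n : ℕ} (h : x ^ n = 0) : NormedSpace.exp x = ∑ k ∈ range n, (k !⁻¹ : 𝕂) • x ^ k := by
  rw [NormedSpace.exp_eq_tsum 𝕂]
  refine tsum_eq_sum fun k hk => ?_
  rw [pow_eq_zero_of_le (by simpa using hk) h, smul_zero]

theorem neg_Nmat {R : Type*} [NegZeroClass R] (a b e f : R) :
    -Nmat a b e f = Nmat (-a) (-b) (-e) (-f) := by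
  ext i j
  fin_cases i <;> fin_cases j <;> simp [Nmat]

theorem Nmat_pow_four {R : Type*} [Ring R] (a b e f : R) : Nmat a b e f ^ 4 = 0 := by
  ext i j
  fin_cases i <;> fin_cases j <;> simp [Nmat, pow_succ, mul_apply, Fin.sum_univ_four]

theorem exp_Nmat {𝕂 : Type*} [Field 𝕂] [CharZero 𝕂] [TopologicalSpace 𝕂] [IsTopologicalRing 𝕂]
    (a b e f : 𝕂) :
    NormedSpace.exp (Nmat a b e f) =
      !![1, 0, 0, 0;
         a, 1, 0, 0;
         e + a * b / 2, b, 1, 0;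
         f - a ^ 2 * b / 6, e - a * b / 2, -a, 1] := by
  rw [NormedSpace.exp_eq_sum_range_of_pow_eq_zero 𝕂 (Nmat_pow_four a b e f)]
  ext i j
  fin_cases i <;> fin_cases j <;> simp [Nmat, Finset.sum_range_succ, pow_succ, one_apply] <;> ring

/-- conjugating `N(a,b,e,f)` by `A = exp(N(p,q,r,s))` gives
`N(a, b, e − bp + aq, f − 2ep + bp² − apq + 2ar)`; in particular `a` and `b`
are unchanged. -/
theorem stmt4 (a b e f p q r s : ℝ) (A : Matrix (Fin 4) (Fin 4) ℝ)
    (hA : A = NormedSpace.exp (Nmat p q r s)) :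
    A * Nmat a b e f * A⁻¹ =
      Nmat a b (e - b * p + a * q) (f - 2 * e * p + b * p ^ 2 - a * p * q + 2 * a * r) := by
  have hA_inv : A⁻¹ = NormedSpace.exp (Nmat (-p) (-q) (-r) (-s)) := by
    rw [hA, ← Matrix.exp_neg, neg_Nmat]
  rw [hA_inv, hA, exp_Nmat, exp_Nmat]
  ext i j
  fin_cases i <;> fin_cases j <;> simp [Nmat, mul_apply, Fin.sum_univ_four] <;> ring
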